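/- Let ε > 0, K ≥ 2 an integer, 1 ≤ d ≤ min{K − 1, 2K/3}, y ∈ [K], L ≥ 0, and let v_1, …, v_K be vectors in a real inner product space with ‖v_k‖ ≤ L for all k. Let S be drawn from the d-subset selection distribution with true label y, and let ĝ = (1/(γ_d − ζ_d)) · Σ_{k ∈ [K]} (1{k ∈ S} − ζ_d) · v_k, where γ_d = d e^ε/(d e^ε + K − d) and ζ_d = (d − γ_d)/(K − 1). Then E[‖ĝ‖²] ≤ 18·(e^ε + K/d)²·(1 + d)·L²/(e^ε − 1)². -/

import Mathlib

open Finset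

/-- The `d`-subset selection randomizer with privacy parameter `ε` and true label `y`:
a `d`-element subset `A ⊆ [K]` gets probability `e^ε / D` if `y ∈ A` and `1 / D` otherwise,
where `D = e^ε · C(K-1, d-1) + C(K-1, d)`. -/
noncomputable def dSubsetProb (ε : ℝ) (K d : ℕ) (y : Fin K) (A : Finset (Fin K)) : ℝ :=
  if A.card = d then
    (if y ∈ A then Real.exp ε else 1) /
      (Real.exp ε * (K - 1).choose (d - 1) + (K - 1).choose d)
  else 0

/-- `γ_d = d e^ε / (d e^ε + K - d)`, the probability that the true label is in the output. -/
noncomputable def gammaD (ε : ℝ) (K d : ℕ) : ℝ :=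
  d * Real.exp ε / (d * Real.exp ε + K - d)

/-- `ζ_d = (d - γ_d)/(K - 1)`, the probability that any fixed other label is in the output. -/
noncomputable def zetaD (ε : ℝ) (K d : ℕ) : ℝ :=
  (d - gammaD ε K d) / (K - 1)

/-!
Write `X k = 1{k ∈ S} - ζ_d` and split off the term `k = y`:
`‖∑ X k • v k‖² ≤ 2 ‖X y • v y‖² + 2 ‖∑_{k ≠ y} X k • v k‖²`, where the first term is at most `L²`
because `|X y| ≤ 1`.

For `s ∌ y`, the probability that `S ⊇ s` is a ratio of binomial counts depending only on `#s`,
so the indicators `1{k ∈ S}`, `k ≠ y`, are exchangeable. Their common mean is `ζ_d` (since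
`|S| = d` and `Pr[y ∈ S] = γ_d`), and the covariance matrix of `(X k)_{k ≠ y}` is `a I + b J`
(`J` all ones) with `a = ζ_d - Pr[j, k ∈ S] ≥ 0`. Hence `E ‖∑_{k ≠ y} X k • v k‖²` is at most the top eigenvalue
`max a (a + (K - 1) b)` times `∑ ‖v k‖² ≤ (K - 1) L²`. Here `(K - 1) a ≤ (K - 1) ζ_d ≤ d`, while
`(K - 1) (a + (K - 1) b) = E (∑_{k ≠ y} X k)² = E (γ_d - 1{y ∈ S})² ≤ 1`.

So `E ‖∑ X k • v k‖² ≤ 2 (1 + d) L²`, and `1 / (γ_d - ζ_d) ≤ 3 (e^ε + K/d) / (e^ε - 1)`.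
-/

open RealInnerProductSpace

theorem norm_add_sq_le_two_mul {E : Type*} [SeminormedAddCommGroup E] (a b : E) :
    ‖a + b‖ ^ 2 ≤ 2 * (‖a‖ ^ 2 + ‖b‖ ^ 2) :=
  (pow_le_pow_left₀ (norm_nonneg _) (norm_add_le a b) 2).trans add_sq_le

section SecondMoment

variable {Ω ι V : Type*} [Fintype Ω] [NormedAddCommGroup V] [InnerProductSpace ℝ V]
  (P : Ω → ℝ) (X : ι → Ω → ℝ) (t : Finset ι)

theorem sum_mul_norm_sum_smul_sq (v : ι → V) :
    ∑ ω, P ω * ‖∑ k ∈ t, X k ω • v k‖ ^ 2 =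
      ∑ j ∈ t, ∑ k ∈ t, (∑ ω, P ω * (X j ω * X k ω)) * ⟪v j, v k⟫ := by
  simp_rw [← real_inner_self_eq_norm_sq, sum_inner, inner_sum, real_inner_smul_left,
    real_inner_smul_right, mul_sum, sum_mul]
  rw [sum_comm]
  refine sum_congr rfl fun j _ => ?_
  rw [sum_comm]
  refine sum_congr rfl fun k _ => sum_congr rfl fun ω _ => by ring

theorem sum_mul_norm_sum_smul_sq_of_moments {a b : ℝ}
    (hdiag : ∀ j ∈ t, ∑ ω, P ω * (X j ω * X j ω) = a + b)
    (hoff : ∀ j ∈ t, ∀ k ∈ t, j ≠ k → ∑ ω, P ω * (X j ω * X k ω) = b) (v : ι → V) :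
    ∑ ω, P ω * ‖∑ k ∈ t, X k ω • v k‖ ^ 2 =
      a * ∑ k ∈ t, ‖v k‖ ^ 2 + b * ‖∑ k ∈ t, v k‖ ^ 2 := by
  classical
  have hM : ∀ j ∈ t, ∀ k ∈ t, ∑ ω, P ω * (X j ω * X k ω) = (if j = k then a else 0) + b := by
    intro j hj k hk
    split_ifs with hjk
    · subst hjk; exact hdiag j hj
    · rw [hoff j hj k hk hjk, zero_add]
  rw [sum_mul_norm_sum_smul_sq, ← real_inner_self_eq_norm_sq, sum_inner, mul_sum, mul_sum]
  simp_rw [inner_sum, mul_sum, ← sum_add_distrib]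
  refine sum_congr rfl fun j hj => ?_
  simp_rw [sum_congr rfl fun k hk => congrArg (· * ⟪v j, v k⟫) (hM j hj k hk), add_mul,
    sum_add_distrib, ite_mul, zero_mul, sum_ite_eq t j, if_pos hj, real_inner_self_eq_norm_sq]

theorem mul_add_mul_le_max_mul {a b n S T : ℝ} (hS : 0 ≤ S) (hT : 0 ≤ T) (hTS : T ≤ n * S) :
    a * S + b * T ≤ max a (a + n * b) * S := by
  rcases le_total b 0 with hb | hb
  · nlinarith [le_max_left a (a + n * b)]
  · nlinarith [le_max_right a (a + n * b)]

theorem sum_mul_norm_sum_smul_sq_le {a b L : ℝ} (ha : 0 ≤ a)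
    (hdiag : ∀ j ∈ t, ∑ ω, P ω * (X j ω * X j ω) = a + b)
    (hoff : ∀ j ∈ t, ∀ k ∈ t, j ≠ k → ∑ ω, P ω * (X j ω * X k ω) = b)
    (v : ι → V) (hv : ∀ k ∈ t, ‖v k‖ ≤ L) :
    ∑ ω, P ω * ‖∑ k ∈ t, X k ω • v k‖ ^ 2 ≤
      max (#t * a) (∑ ω, P ω * (∑ k ∈ t, X k ω) ^ 2) * L ^ 2 := by
  have hW : ∑ ω, P ω * (∑ k ∈ t, X k ω) ^ 2 = a * #t + b * #t ^ 2 := by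
    simpa using
      sum_mul_norm_sum_smul_sq_of_moments P X t hdiag hoff (fun _ => (1 : ℝ))
  have hS : ∑ k ∈ t, ‖v k‖ ^ 2 ≤ #t * L ^ 2 := by
    simpa using sum_le_sum fun k hk => pow_le_pow_left₀ (norm_nonneg _) (hv k hk) 2
  have hT : ‖∑ k ∈ t, v k‖ ^ 2 ≤ #t * ∑ k ∈ t, ‖v k‖ ^ 2 :=
    (pow_le_pow_left₀ (norm_nonneg _) (norm_sum_le _ _) 2).trans sq_sum_le_card_mul_sum_sq
  rw [sum_mul_norm_sum_smul_sq_of_moments P X t hdiag hoff, hW]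
  calc _ ≤ max a (a + #t * b) * ∑ k ∈ t, ‖v k‖ ^ 2 :=
        mul_add_mul_le_max_mul (sum_nonneg fun _ _ => sq_nonneg _) (sq_nonneg _) hT
    _ ≤ max a (a + #t * b) * (#t * L ^ 2) :=
        mul_le_mul_of_nonneg_left hS (ha.trans (le_max_left _ _))
    _ = max (#t * a) (a * #t + b * #t ^ 2) * L ^ 2 := by
        rw [show a * #t + b * #t ^ 2 = #t * (a + #t * b) by ring,
          ← mul_max_of_nonneg _ _ (Nat.cast_nonneg _)]
        ring

end SecondMoment

theorem card_filter_powersetCard_subset_congr {α : Type*} [DecidableEq α] {s s' u : Finset α}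
    (d : ℕ) (hs : s ⊆ u) (hs' : s' ⊆ u) (h : #s = #s') :
    #{A ∈ u.powersetCard d | s ⊆ A} = #{A ∈ u.powersetCard d | s' ⊆ A} := by
  by_cases hd : #s ≤ d
  · rw [card_filter_powersetCard_subset _ _ _ hs hd,
      card_filter_powersetCard_subset _ _ _ hs' (h ▸ hd), h]
  · have hempty : ∀ s : Finset α, d < #s → {A ∈ u.powersetCard d | s ⊆ A} = ∅ :=
      fun s hd => filter_eq_empty_iff.2 fun A hA hsA =>
        hd.not_ge ((card_le_card hsA).trans (mem_powersetCard.1 hA).2.le)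
    rw [hempty s (by omega), hempty s' (by omega)]

section Parameters

variable {ε : ℝ} {K d : ℕ}

theorem gammaD_nonneg (hdK : d ≤ K) : 0 ≤ gammaD ε K d := by
  have : (d : ℝ) ≤ K := by exact_mod_cast hdK
  unfold gammaD
  exact div_nonneg (by positivity) (by nlinarith [Real.exp_pos ε, d.cast_nonneg (α := ℝ)])

theorem gammaD_le_one (hdK : d ≤ K) : gammaD ε K d ≤ 1 := by
  have : (d : ℝ) ≤ K := by exact_mod_cast hdK
  unfold gammaD
  exact div_le_one_of_le₀ (by linarith) (by nlinarith [Real.exp_pos ε, d.cast_nonneg (α := ℝ)])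

theorem sub_one_mul_zetaD (hK : 2 ≤ K) : ((K : ℝ) - 1) * zetaD ε K d = d - gammaD ε K d := by
  have : (K : ℝ) - 1 ≠ 0 := by
    have : (2 : ℝ) ≤ K := by exact_mod_cast hK
    linarith
  unfold zetaD
  field_simp

theorem zetaD_nonneg (hd1 : 1 ≤ d) (hdK : d ≤ K) : 0 ≤ zetaD ε K d := by
  have : (1 : ℝ) ≤ d := by exact_mod_cast hd1
  have : (d : ℝ) ≤ K := by exact_mod_cast hdK
  unfold zetaD
  exact div_nonneg (by linarith [gammaD_le_one (ε := ε) hdK]) (by linarith)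

theorem zetaD_le_one (hd1 : 1 ≤ d) (hd2 : d ≤ K - 1) : zetaD ε K d ≤ 1 := by
  have : (d : ℝ) + 1 ≤ K := by exact_mod_cast (show d + 1 ≤ K by omega)
  unfold zetaD
  exact div_le_one_of_le₀ (by linarith [gammaD_nonneg (ε := ε) (show d ≤ K by omega)])
    (by linarith)

theorem gammaD_sub_zetaD (hd1 : 1 ≤ d) (hd2 : d ≤ K - 1) :
    gammaD ε K d - zetaD ε K d =
      d * (K - d) * (Real.exp ε - 1) / ((K - 1) * (d * Real.exp ε + K - d)) := by
  have : (1 : ℝ) ≤ d := by exact_mod_cast hd1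
  have : (d : ℝ) + 1 ≤ K := by exact_mod_cast (show d + 1 ≤ K by omega)
  have : (0 : ℝ) < d * Real.exp ε + K - d := by nlinarith [Real.exp_pos ε]
  have : (K : ℝ) - 1 ≠ 0 := by linarith
  unfold zetaD gammaD
  field_simp
  ring

theorem gammaD_sub_zetaD_pos (hε : 0 < ε) (hd1 : 1 ≤ d) (hd2 : d ≤ K - 1) :
    0 < gammaD ε K d - zetaD ε K d := by
  have : (1 : ℝ) ≤ d := by exact_mod_cast hd1
  have : (d : ℝ) + 1 ≤ K := by exact_mod_cast (show d + 1 ≤ K by omega)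
  have : 1 < Real.exp ε := Real.one_lt_exp_iff.2 hε
  rw [gammaD_sub_zetaD hd1 hd2]
  apply div_pos <;> apply mul_pos <;> nlinarith

theorem one_div_gammaD_sub_zetaD_le (hε : 0 < ε) (hd1 : 1 ≤ d) (hd2 : d ≤ K - 1)
    (hd3 : (d : ℝ) ≤ 2 * K / 3) :
    1 / (gammaD ε K d - zetaD ε K d) ≤ 3 * (Real.exp ε + K / d) / (Real.exp ε - 1) := by
  have : (1 : ℝ) ≤ d := by exact_mod_cast hd1
  have : (d : ℝ) + 1 ≤ K := by exact_mod_cast (show d + 1 ≤ K by omega)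
  have : 1 < Real.exp ε := Real.one_lt_exp_iff.2 hε
  have hden : 0 ≤ d * Real.exp ε + K - d := by nlinarith
  have hrhs : 3 * (Real.exp ε + K / d) / (Real.exp ε - 1) =
      3 * (d * Real.exp ε + K) / (d * (Real.exp ε - 1)) := by
    field_simp
  rw [gammaD_sub_zetaD hd1 hd2, one_div_div, hrhs,
    div_le_div_iff₀ (by apply mul_pos <;> nlinarith) (by nlinarith)]
  have key : ((K : ℝ) - 1) * (d * Real.exp ε + K - d) ≤ 3 * (d * Real.exp ε + K) * (K - d) := by
    nlinarith
  nlinarith [mul_le_mul_of_nonneg_right key (by nlinarith : (0 : ℝ) ≤ d * (Real.exp ε - 1))]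

end Parameters

theorem sum_indicator_mem {α : Type*} [Fintype α] [DecidableEq α] (A : Finset α) :
    ∑ k, (if k ∈ A then (1 : ℝ) else 0) = #A := by
  simp

section DSubset

variable {ε : ℝ} {K d : ℕ} {y : Fin K}

theorem dSubsetProb_nonneg (A : Finset (Fin K)) : 0 ≤ dSubsetProb ε K d y A := by
  unfold dSubsetProb
  split_ifs <;> positivity

theorem sum_dSubsetProb_mul_le {f g : Finset (Fin K) → ℝ} (h : ∀ A, #A = d → f A ≤ g A) :
    ∑ A, dSubsetProb ε K d y A * f A ≤ ∑ A, dSubsetProb ε K d y A * g A := by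
  refine sum_le_sum fun A _ => ?_
  by_cases hA : #A = d
  · exact mul_le_mul_of_nonneg_left (h A hA) (dSubsetProb_nonneg A)
  · simp [dSubsetProb, hA]

theorem sum_dSubsetProb_mul_indicator_subset (s : Finset (Fin K)) :
    ∑ A, dSubsetProb ε K d y A * (if s ⊆ A then 1 else 0) =
      (#{A ∈ univ.powersetCard d | s ⊆ A} +
          (Real.exp ε - 1) * #{A ∈ univ.powersetCard d | insert y s ⊆ A}) /
        (Real.exp ε * (K - 1).choose (d - 1) + (K - 1).choose d) := by
  have hpt : ∀ A : Finset (Fin K), dSubsetProb ε K d y A * (if s ⊆ A then 1 else 0) =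
      ((if A ∈ univ.powersetCard d ∧ s ⊆ A then 1 else 0) +
          (Real.exp ε - 1) * (if A ∈ univ.powersetCard d ∧ insert y s ⊆ A then 1 else 0)) /
        (Real.exp ε * (K - 1).choose (d - 1) + (K - 1).choose d) := by
    intro A
    by_cases hA : #A = d <;> by_cases hs : s ⊆ A <;> by_cases hy : y ∈ A <;>
      simp [dSubsetProb, hA, hs, hy, insert_subset_iff]
  simp only [sum_congr rfl fun A _ => hpt A, ← sum_div, sum_add_distrib, ← mul_sum, sum_boole,
    ← filter_filter, filter_mem_eq_inter, univ_inter]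

theorem sum_dSubsetProb_mul_indicator_subset_congr {s s' : Finset (Fin K)} (hs : y ∉ s)
    (hs' : y ∉ s') (h : #s = #s') :
    ∑ A, dSubsetProb ε K d y A * (if s ⊆ A then 1 else 0) =
      ∑ A, dSubsetProb ε K d y A * (if s' ⊆ A then 1 else 0) := by
  have hins : #(insert y s) = #(insert y s') := by
    rw [card_insert_of_notMem hs, card_insert_of_notMem hs', h]
  rw [sum_dSubsetProb_mul_indicator_subset, sum_dSubsetProb_mul_indicator_subset,
    card_filter_powersetCard_subset_congr d (subset_univ s) (subset_univ s') h,
    card_filter_powersetCard_subset_congr d (subset_univ _) (subset_univ _) hins]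

theorem dSubsetProb_denom_pos (hd1 : 1 ≤ d) (hdK : d ≤ K) :
    0 < Real.exp ε * (K - 1).choose (d - 1) + (K - 1).choose d := by
  have : 0 < (K - 1).choose (d - 1) := Nat.choose_pos (by omega)
  positivity

theorem sum_dSubsetProb (hd1 : 1 ≤ d) (hdK : d ≤ K) : ∑ A, dSubsetProb ε K d y A = 1 := by
  have hall : #{A ∈ (univ : Finset (Fin K)).powersetCard d | ∅ ⊆ A} = K.choose d := by
    rw [card_filter_powersetCard_subset _ _ _ (empty_subset _) (Nat.zero_le _)]
    simp
  have hy : #{A ∈ (univ : Finset (Fin K)).powersetCard d | insert y ∅ ⊆ A} =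
      (K - 1).choose (d - 1) := by
    rw [card_filter_powersetCard_subset _ _ _ (subset_univ _) (by simpa using hd1)]
    simp
  have hpascal : K.choose d = (K - 1).choose (d - 1) + (K - 1).choose d := by
    obtain ⟨K, rfl⟩ : ∃ K', K = K' + 1 := ⟨K - 1, by omega⟩
    obtain ⟨d, rfl⟩ : ∃ d', d = d' + 1 := ⟨d - 1, by omega⟩
    simp [Nat.choose_succ_succ]
  have h := sum_dSubsetProb_mul_indicator_subset (ε := ε) (d := d) (y := y) ∅
  rw [hall, hy] at h
  simp only [empty_subset, if_true, mul_one] at h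
  rw [h, hpascal, div_eq_one_iff_eq (dSubsetProb_denom_pos hd1 hdK).ne']
  push_cast
  ring

theorem sum_dSubsetProb_mul_indicator_self (hd1 : 1 ≤ d) (hdK : d ≤ K) :
    ∑ A, dSubsetProb ε K d y A * (if y ∈ A then 1 else 0) = gammaD ε K d := by
  have hy : #{A ∈ (univ : Finset (Fin K)).powersetCard d | {y} ⊆ A} = (K - 1).choose (d - 1) := by
    rw [card_filter_powersetCard_subset _ _ _ (subset_univ _) (by simpa using hd1)]
    simp
  have hchoose : (d : ℝ) * (K - 1).choose d = (K - d) * (K - 1).choose (d - 1) := by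
    have h := Nat.choose_succ_right_eq (K - 1) (d - 1)
    rw [Nat.sub_add_cancel hd1, show K - 1 - (d - 1) = K - d by omega] at h
    rw [← Nat.cast_sub hdK]
    exact_mod_cast (mul_comm _ _).trans (h.trans (mul_comm _ _))
  have h := sum_dSubsetProb_mul_indicator_subset (ε := ε) (d := d) (y := y) {y}
  rw [insert_eq_of_mem (mem_singleton_self y), hy] at h
  simp only [singleton_subset_iff] at h
  have : (1 : ℝ) ≤ d := by exact_mod_cast hd1
  have : (d : ℝ) ≤ K := by exact_mod_cast hdK
  rw [h, gammaD, div_eq_div_iff (dSubsetProb_denom_pos hd1 hdK).ne'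
    (by nlinarith [Real.exp_pos ε])]
  linear_combination (-Real.exp ε) * hchoose

theorem sum_dSubsetProb_mul_indicator_of_ne (hd1 : 1 ≤ d) (hdK : d ≤ K) {j : Fin K} (hj : j ≠ y) :
    ∑ A, dSubsetProb ε K d y A * (if j ∈ A then 1 else 0) = zetaD ε K d := by
  have hK : 2 ≤ K := by have := Fin.val_ne_of_ne hj; omega
  have hexch : ∀ k ∈ univ.erase y, ∑ A, dSubsetProb ε K d y A * (if k ∈ A then 1 else 0) =
      ∑ A, dSubsetProb ε K d y A * (if j ∈ A then 1 else 0) := by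
    intro k hk
    simpa only [singleton_subset_iff] using sum_dSubsetProb_mul_indicator_subset_congr
      (ε := ε) (d := d) (s := {k}) (s' := {j}) (by simpa using (ne_of_mem_erase hk).symm)
      (by simpa using hj.symm) rfl
  have htotal : ∑ k, ∑ A, dSubsetProb ε K d y A * (if k ∈ A then 1 else 0) = d := by
    calc _ = ∑ A, dSubsetProb ε K d y A * d := by
          rw [sum_comm]
          refine sum_congr rfl fun A _ => ?_
          rw [← mul_sum, sum_indicator_mem]
          by_cases hA : #A = d
          · rw [hA]
          · simp [dSubsetProb, hA]
      _ = d := by rw [← sum_mul, sum_dSubsetProb hd1 hdK, one_mul]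
  rw [← add_sum_erase _ _ (mem_univ y), sum_dSubsetProb_mul_indicator_self hd1 hdK,
    sum_congr rfl hexch, sum_const, card_erase_of_mem (mem_univ y), card_univ,
    Fintype.card_fin, nsmul_eq_mul, Nat.cast_sub (by omega)] at htotal
  have : (2 : ℝ) ≤ K := by exact_mod_cast hK
  rw [zetaD, eq_div_iff (by linarith)]
  push_cast at htotal
  linarith

theorem exists_sum_dSubsetProb_mul_indicator_pair (hd1 : 1 ≤ d) (hdK : d ≤ K) :
    ∃ p ∈ Set.Icc 0 (zetaD ε K d), ∀ j k : Fin K, j ≠ y → k ≠ y → j ≠ k →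
      ∑ A, dSubsetProb ε K d y A * ((if j ∈ A then 1 else 0) * (if k ∈ A then 1 else 0)) = p := by
  have hpair : ∀ (j k : Fin K) (A : Finset (Fin K)),
      (if j ∈ A then (1 : ℝ) else 0) * (if k ∈ A then 1 else 0) = if {j, k} ⊆ A then 1 else 0 := by
    intro j k A
    by_cases hj : j ∈ A <;> by_cases hk : k ∈ A <;> simp [hj, hk, insert_subset_iff]
  by_cases h : ∃ j k : Fin K, j ≠ y ∧ k ≠ y ∧ j ≠ k
  · obtain ⟨j₀, k₀, hj₀, hk₀, hjk₀⟩ := h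
    refine ⟨∑ A, dSubsetProb ε K d y A * ((if j₀ ∈ A then 1 else 0) * (if k₀ ∈ A then 1 else 0)),
      ⟨?_, ?_⟩, fun j k hj hk hjk => ?_⟩
    · exact sum_nonneg fun A _ => mul_nonneg (dSubsetProb_nonneg A) (by positivity)
    · rw [← sum_dSubsetProb_mul_indicator_of_ne hd1 hdK hj₀]
      exact sum_dSubsetProb_mul_le fun A _ => by split_ifs <;> norm_num
    · simp only [hpair]
      exact sum_dSubsetProb_mul_indicator_subset_congr (by simp [hj.symm, hk.symm])
        (by simp [hj₀.symm, hk₀.symm]) (by rw [card_pair hjk, card_pair hjk₀])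
  · push Not at h
    exact ⟨0, ⟨le_rfl, zetaD_nonneg hd1 hdK⟩, fun j k hj hk hjk => absurd (h j k hj hk) hjk⟩

theorem sum_dSubsetProb_mul_centered (hd1 : 1 ≤ d) (hdK : d ≤ K) {j k : Fin K} (hj : j ≠ y)
    (hk : k ≠ y) :
    ∑ A, dSubsetProb ε K d y A *
        (((if j ∈ A then 1 else 0) - zetaD ε K d) * ((if k ∈ A then 1 else 0) - zetaD ε K d)) =
      ∑ A, dSubsetProb ε K d y A * ((if j ∈ A then 1 else 0) * (if k ∈ A then 1 else 0)) -
        zetaD ε K d ^ 2 := by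
  have hpt : ∀ A : Finset (Fin K), dSubsetProb ε K d y A *
      (((if j ∈ A then 1 else 0) - zetaD ε K d) * ((if k ∈ A then 1 else 0) - zetaD ε K d)) =
        dSubsetProb ε K d y A * ((if j ∈ A then 1 else 0) * (if k ∈ A then 1 else 0)) -
          zetaD ε K d * (dSubsetProb ε K d y A * (if j ∈ A then 1 else 0)) -
          zetaD ε K d * (dSubsetProb ε K d y A * (if k ∈ A then 1 else 0)) +
          zetaD ε K d ^ 2 * dSubsetProb ε K d y A :=
    fun A => by ring
  rw [sum_congr rfl fun A _ => hpt A, sum_add_distrib, sum_sub_distrib, sum_sub_distrib,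
    ← mul_sum, ← mul_sum, ← mul_sum, sum_dSubsetProb_mul_indicator_of_ne hd1 hdK hj,
    sum_dSubsetProb_mul_indicator_of_ne hd1 hdK hk, sum_dSubsetProb hd1 hdK]
  ring

end DSubset

section Estimator

variable {V : Type*} [NormedAddCommGroup V] [InnerProductSpace ℝ V] {ε : ℝ} {K d : ℕ} {y : Fin K}
  {L : ℝ}

theorem sum_dSubsetProb_mul_norm_sum_erase_sq_le (hd1 : 1 ≤ d) (hd2 : d ≤ K - 1) (v : Fin K → V)
    (hv : ∀ k, ‖v k‖ ≤ L) :
    ∑ A, dSubsetProb ε K d y A *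
        ‖∑ k ∈ univ.erase y, ((if k ∈ A then 1 else 0) - zetaD ε K d) • v k‖ ^ 2 ≤ d * L ^ 2 := by
  have hdK : d ≤ K := by omega
  have hK : 2 ≤ K := by omega
  obtain ⟨p, ⟨hp0, hpζ⟩, hp⟩ := exists_sum_dSubsetProb_mul_indicator_pair (ε := ε) (y := y) hd1 hdK
  have hle := sum_mul_norm_sum_smul_sq_le (dSubsetProb ε K d y)
    (fun k A => (if k ∈ A then 1 else 0) - zetaD ε K d) (univ.erase y)
    (a := zetaD ε K d - p) (b := p - zetaD ε K d ^ 2) (sub_nonneg.2 hpζ) ?diag ?off v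
    (fun k _ => hv k)
  case diag =>
    intro j hj
    rw [sum_dSubsetProb_mul_centered hd1 hdK (ne_of_mem_erase hj) (ne_of_mem_erase hj)]
    have hidem : ∀ A : Finset (Fin K),
        (if j ∈ A then (1 : ℝ) else 0) * (if j ∈ A then 1 else 0) = if j ∈ A then 1 else 0 :=
      fun A => by split_ifs <;> norm_num
    simp only [hidem, sum_dSubsetProb_mul_indicator_of_ne hd1 hdK (ne_of_mem_erase hj)]
    ring
  case off =>
    intro j hj k hk hjk
    rw [sum_dSubsetProb_mul_centered hd1 hdK (ne_of_mem_erase hj) (ne_of_mem_erase hk),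
      hp j k (ne_of_mem_erase hj) (ne_of_mem_erase hk) hjk]
  have hcard : (#(univ.erase y) : ℝ) = K - 1 := by
    rw [card_erase_of_mem (mem_univ _), card_univ, Fintype.card_fin, Nat.cast_sub (by omega),
      Nat.cast_one]
  refine hle.trans (mul_le_mul_of_nonneg_right (max_le ?_ ?_) (sq_nonneg L))
  · rw [hcard]
    nlinarith [sub_one_mul_zetaD (ε := ε) (d := d) hK, gammaD_nonneg (ε := ε) hdK]
  · have hsum : ∀ A : Finset (Fin K), #A = d →
        ∑ k ∈ univ.erase y, ((if k ∈ A then 1 else 0) - zetaD ε K d) =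
          gammaD ε K d - if y ∈ A then 1 else 0 := by
      intro A hA
      have h := add_sum_erase univ (fun k => if k ∈ A then (1 : ℝ) else 0) (mem_univ y)
      rw [sum_indicator_mem, hA] at h
      rw [sum_sub_distrib, sum_const, nsmul_eq_mul, hcard, sub_one_mul_zetaD hK]
      linarith
    calc _ ≤ ∑ A, dSubsetProb ε K d y A * 1 := sum_dSubsetProb_mul_le fun A hA => by
          rw [hsum A hA]
          have := gammaD_nonneg (ε := ε) hdK
          have := gammaD_le_one (ε := ε) hdK
          split_ifs <;> nlinarith
      _ = 1 := by simp only [mul_one, sum_dSubsetProb hd1 hdK]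
      _ ≤ d := by exact_mod_cast hd1

theorem sum_dSubsetProb_mul_norm_sum_sq_le (hd1 : 1 ≤ d) (hd2 : d ≤ K - 1) (v : Fin K → V)
    (hv : ∀ k, ‖v k‖ ≤ L) :
    ∑ A, dSubsetProb ε K d y A *
        ‖∑ k, ((if k ∈ A then 1 else 0) - zetaD ε K d) • v k‖ ^ 2 ≤ 2 * (1 + d) * L ^ 2 := by
  have hdK : d ≤ K := by omega
  have hζ0 := zetaD_nonneg (ε := ε) hd1 hdK
  have hζ1 := zetaD_le_one (ε := ε) hd1 hd2
  have hsplit : ∀ A : Finset (Fin K),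
      ‖∑ k, ((if k ∈ A then 1 else 0) - zetaD ε K d) • v k‖ ^ 2 ≤
        2 * L ^ 2 +
          2 * ‖∑ k ∈ univ.erase y, ((if k ∈ A then 1 else 0) - zetaD ε K d) • v k‖ ^ 2 := by
    intro A
    have hy : ‖((if y ∈ A then 1 else 0) - zetaD ε K d) • v y‖ ≤ L := by
      rw [norm_smul]
      refine (mul_le_mul (abs_le.2 ⟨?_, ?_⟩) (hv y) (norm_nonneg _) zero_le_one).trans_eq
        (one_mul L) <;> split_ifs <;> linarith
    rw [← add_sum_erase _ _ (mem_univ y)]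
    nlinarith [norm_add_sq_le_two_mul (((if y ∈ A then 1 else 0) - zetaD ε K d) • v y)
        (∑ k ∈ univ.erase y, ((if k ∈ A then 1 else 0) - zetaD ε K d) • v k),
      norm_nonneg (((if y ∈ A then 1 else 0) - zetaD ε K d) • v y)]
  calc _ ≤ ∑ A, dSubsetProb ε K d y A * (2 * L ^ 2 +
          2 * ‖∑ k ∈ univ.erase y, ((if k ∈ A then 1 else 0) - zetaD ε K d) • v k‖ ^ 2) :=
        sum_dSubsetProb_mul_le fun A _ => hsplit A
    _ = 2 * L ^ 2 * ∑ A, dSubsetProb ε K d y A + 2 * ∑ A, dSubsetProb ε K d y A *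
          ‖∑ k ∈ univ.erase y, ((if k ∈ A then 1 else 0) - zetaD ε K d) • v k‖ ^ 2 := by
        rw [mul_sum, mul_sum, ← sum_add_distrib]
        exact sum_congr rfl fun A _ => by ring
    _ ≤ 2 * L ^ 2 * 1 + 2 * (d * L ^ 2) := by
        rw [sum_dSubsetProb hd1 hdK]
        linarith [sum_dSubsetProb_mul_norm_sum_erase_sq_le (ε := ε) (y := y) hd1 hd2 v hv]
    _ = 2 * (1 + d) * L ^ 2 := by ring

end Estimator

theorem stmt_16_general {V : Type*} [NormedAddCommGroup V] [InnerProductSpace ℝ V]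
    (ε : ℝ) (hε : 0 < ε) (K : ℕ) (d : ℕ)
    (hd1 : 1 ≤ d) (hd2 : d ≤ K - 1) (hd3 : (d : ℝ) ≤ 2 * K / 3)
    (y : Fin K) (L : ℝ) (v : Fin K → V) (hv : ∀ k, ‖v k‖ ≤ L) :
    (∑ A : Finset (Fin K), dSubsetProb ε K d y A *
        ‖(1 / (gammaD ε K d - zetaD ε K d)) •
            ∑ k : Fin K, ((if k ∈ A then (1 : ℝ) else 0) - zetaD ε K d) • v k‖ ^ 2)
      ≤ 18 * (Real.exp ε + K / d) ^ 2 * (1 + d) * L ^ 2 / (Real.exp ε - 1) ^ 2 := by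
  have hc := one_div_gammaD_sub_zetaD_le hε hd1 hd2 hd3
  have hc0 : 0 < 1 / (gammaD ε K d - zetaD ε K d) :=
    one_div_pos.2 (gammaD_sub_zetaD_pos hε hd1 hd2)
  simp_rw [norm_smul, mul_pow, Real.norm_of_nonneg hc0.le, mul_left_comm _ (_ ^ 2), ← mul_sum]
  calc _ ≤ (3 * (Real.exp ε + K / d) / (Real.exp ε - 1)) ^ 2 * (2 * (1 + d) * L ^ 2) :=
        mul_le_mul (pow_le_pow_left₀ hc0.le hc 2)
          (sum_dSubsetProb_mul_norm_sum_sq_le hd1 hd2 v hv)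
          (sum_nonneg fun A _ => mul_nonneg (dSubsetProb_nonneg A) (sq_nonneg _)) (sq_nonneg _)
    _ = _ := by rw [div_pow]; ring

theorem stmt_16 {V : Type*} [NormedAddCommGroup V] [InnerProductSpace ℝ V]
    (ε : ℝ) (hε : 0 < ε) (K : ℕ) (hK : 2 ≤ K) (d : ℕ)
    (hd1 : 1 ≤ d) (hd2 : d ≤ K - 1) (hd3 : (d : ℝ) ≤ 2 * K / 3)
    (y : Fin K) (L : ℝ) (hL : 0 ≤ L) (v : Fin K → V) (hv : ∀ k, ‖v k‖ ≤ L) :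
    (∑ A : Finset (Fin K), dSubsetProb ε K d y A *
        ‖(1 / (gammaD ε K d - zetaD ε K d)) •
            ∑ k : Fin K, ((if k ∈ A then (1 : ℝ) else 0) - zetaD ε K d) • v k‖ ^ 2)
      ≤ 18 * (Real.exp ε + K / d) ^ 2 * (1 + d) * L ^ 2 / (Real.exp ε - 1) ^ 2 :=
  stmt_16_general ε hε K d hd1 hd2 hd3 y L v hv
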